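/- Let ⟨V,H,M,T⟩ be an abduction instance with T a Krom formula, let S ⊆ H, let m ∈ M, and suppose T ∪ S is consistent. Then T ∪ S ⊨ {{m}} if and only if {m} ∈ TrimRes(T,H,M) or there exists h ∈ S such that {¬h, m} ∈ TrimRes(T,H,M). -/
import Mathlib


/-- Propositional variables. -/
abbrev Var := ℕ

/-- A literal: a variable together with a polarity (`true` = positive). -/
abbrev Lit := Var × Bool

/-- A clause is a finite set of literals. -/
abbrev Clause := Finset Lit

/-- A CNF formula is a finite set of clauses. -/
abbrev CNF := Finset Clause

/-- A partial truth assignment: a finite domain together with a valuation. -/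
structure PAssign where
  dom : Finset Var
  val : Var → Bool

/-- Value of a literal under an assignment. -/
def litVal (τ : PAssign) (l : Lit) : Bool := if l.2 then τ.val l.1 else !(τ.val l.1)

/-- A clause is tautological if it contains a variable and its negation. -/
def Tautological (C : Clause) : Prop := ∃ x : Var, (x, true) ∈ C ∧ (x, false) ∈ C

/-- An assignment satisfies a clause: tautological clauses are satisfied by every
assignment; a non-tautological clause is satisfied if some literal (whose variable is
in the domain) is set to 1. -/
def SatClause (τ : PAssign) (C : Clause) : Prop :=
  Tautological C ∨ ∃ l ∈ C, l.1 ∈ τ.dom ∧ litVal τ l = true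

/-- An assignment satisfies a CNF formula if it satisfies every clause. -/
def Satisfies (τ : PAssign) (φ : CNF) : Prop := ∀ C ∈ φ, SatClause τ C

/-- A CNF formula is consistent (satisfiable) if some assignment satisfies it. -/
def Consistent (φ : CNF) : Prop := ∃ τ : PAssign, Satisfies τ φ

/-- Variables of a clause. -/
def clauseVars (C : Clause) : Finset Var := C.image Prod.fst

/-- Variables of a CNF formula. -/
def cnfVars (φ : CNF) : Finset Var := φ.biUnion clauseVars

/-- A model of φ is a satisfying assignment whose domain contains var(φ). -/
def IsModel (τ : PAssign) (φ : CNF) : Prop := Satisfies τ φ ∧ cnfVars φ ⊆ τ.dom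

/-- φ entails ψ if every model of φ whose domain contains var(ψ) is a model of ψ. -/
def Entails (φ ψ : CNF) : Prop :=
  ∀ τ : PAssign, IsModel τ φ → cnfVars ψ ⊆ τ.dom → IsModel τ ψ

open Classical in
/-- The truth assignment reduct φ[τ]: delete all clauses satisfied by τ and delete from
the remaining clauses all literals set to 0 by τ. -/
noncomputable def reduct (φ : CNF) (τ : PAssign) : CNF :=
  (φ.filter (fun C => ¬ SatClause τ C)).image
    (fun C => C.filter (fun l => ¬ (l.1 ∈ τ.dom ∧ litVal τ l = false)))

/-- τ ∈ 2^{B,S}: τ has domain B and sets every s ∈ S ∩ B to 1. -/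
def InTA (τ : PAssign) (B S : Finset Var) : Prop :=
  τ.dom = B ∧ ∀ s ∈ S, s ∈ B → τ.val s = true

/-- A finite set of variables used as a CNF formula: the set of positive unit clauses. -/
def unitCNF (X : Finset Var) : CNF := X.image (fun x => ({(x, true)} : Clause))

/-- An abduction instance ⟨V,H,M,T⟩. -/
structure AbdInst where
  V : Finset Var
  H : Finset Var
  M : Finset Var
  T : CNF
  hH : H ⊆ V
  hM : M ⊆ V
  hHM : Disjoint H M
  hT : cnfVars T ⊆ V

/-- S ⊆ H is a solution to ⟨V,H,M,T⟩ if T ∪ S is consistent and T ∪ S ⊨ M. -/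
def Solution (P : AbdInst) (S : Finset Var) : Prop :=
  S ⊆ P.H ∧ Consistent (P.T ∪ unitCNF S) ∧ Entails (P.T ∪ unitCNF S) (unitCNF P.M)

/-- A solution is subset-minimal if no proper subset is a solution. -/
def MinimalSolution (P : AbdInst) (S : Finset Var) : Prop :=
  Solution P S ∧ ∀ S' : Finset Var, S' ⊂ S → ¬ Solution P S'

/-- Horn formulas: at most one positive literal per clause. -/
def IsHorn (φ : CNF) : Prop := ∀ C ∈ φ, (C.filter (fun l => l.2 = true)).card ≤ 1

/-- Krom formulas: at most two literals per clause. -/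
def IsKrom (φ : CNF) : Prop := ∀ C ∈ φ, C.card ≤ 2

/-- B is a strong backdoor set of φ into the class `cls` if φ[τ] ∈ cls for every
assignment τ with domain B. -/
def StrongBackdoor (cls : CNF → Prop) (φ : CNF) (B : Finset Var) : Prop :=
  ∀ τ : PAssign, τ.dom = B → cls (reduct φ τ)

/-- The total assignment over V setting exactly the variables of U to 1. -/
def assignOf (V U : Finset Var) : PAssign := ⟨V, fun x => decide (x ∈ U)⟩

/-- U (⊆ V, viewed as a total assignment over V) is the least model of φ over V. -/
def IsLeastModel (φ : CNF) (V U : Finset Var) : Prop :=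
  U ⊆ V ∧ Satisfies (assignOf V U) φ ∧
    ∀ U' ⊆ V, Satisfies (assignOf V U') φ → U ⊆ U'

/-- Membership in Res(φ): the closure of φ under resolution, dropping tautological
clauses. -/
inductive ResMem (φ : CNF) : Clause → Prop
  | base {C : Clause} : C ∈ φ → ¬ Tautological C → ResMem φ C
  | resolve {C D : Clause} {x : Var} :
      ResMem φ (insert (x, true) C) → ResMem φ (insert (x, false) D) →
      ¬ Tautological (C ∪ D) → ResMem φ (C ∪ D)

/-- Membership in TrimRes(T,H,M): clauses of Res(T) over variables in H ∪ M; if the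
empty clause is derivable then TrimRes(T,H,M) = {□}. -/
def InTrimRes (T : CNF) (H M : Finset Var) (C : Clause) : Prop :=
  (ResMem T (∅ : Clause) ∧ C = ∅) ∨
    (¬ ResMem T (∅ : Clause) ∧ ResMem T C ∧ ∀ l ∈ C, l.1 ∈ H ∪ M)

/-- A Horn clause is definite if it has exactly one positive literal. -/
def IsDefinite (C : Clause) : Prop := (C.filter (fun l => l.2 = true)).card = 1

/-- A clause is purely negative (a constraint) if it has no positive literal. -/
def PurelyNegative (C : Clause) : Prop := ∀ l ∈ C, l.2 = false

/-- Heads of a clause: variables occurring positively. -/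
def headSet (C : Clause) : Finset Var := (C.filter (fun l => l.2 = true)).image Prod.fst

/-- Body of a clause: variables occurring negatively. -/
def bodySet (C : Clause) : Finset Var := (C.filter (fun l => l.2 = false)).image Prod.fst

/-- One step of the least-model computation for definite clauses:
U ↦ U ∪ {head(C) : C ∈ D, body(C) ⊆ U}. -/
def hornStep (D : CNF) (U : Finset Var) : Finset Var :=
  U ∪ D.biUnion (fun C => if bodySet C ⊆ U then headSet C else ∅)

/-- Size of a CNF formula. -/
def cnfSize (F : CNF) : ℕ := ∑ C ∈ F, (C.card + 1)

/-- Size of an abduction instance. -/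
def instSize (P : AbdInst) : ℕ := P.V.card + P.H.card + P.M.card + ∑ C ∈ P.T, C.card


/-! ### Auxiliary lemmas -/

def negLit (l : Lit) : Lit := (l.1, !l.2)

lemma resmem_nontaut {φ : CNF} {C : Clause} (h : ResMem φ C) : ¬ Tautological C := by
  cases h with
  | base _ h2 => exact h2
  | resolve _ _ h3 => exact h3

lemma taut_mono {C D : Clause} (h : C ⊆ D) : Tautological C → Tautological D := by
  rintro ⟨x, h1, h2⟩; exact ⟨x, h h1, h h2⟩

lemma taut_singleton (l : Lit) : ¬ Tautological ({l} : Clause) := by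
  rintro ⟨y, h1, h2⟩
  simp only [Finset.mem_singleton] at h1 h2
  subst h1
  simp at h2

lemma clauseVars_mono {C D : Clause} (h : C ⊆ D) : clauseVars C ⊆ clauseVars D := by
  intro y hy
  obtain ⟨l, hl, rfl⟩ := Finset.mem_image.mp hy
  exact Finset.mem_image.mpr ⟨l, h hl, rfl⟩

lemma clauseVars_union (C D : Clause) : clauseVars (C ∪ D) ⊆ clauseVars C ∪ clauseVars D := by
  intro y hy
  obtain ⟨l, hl, rfl⟩ := Finset.mem_image.mp hy
  rcases Finset.mem_union.mp hl with h | h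
  · exact Finset.mem_union_left _ (Finset.mem_image.mpr ⟨l, h, rfl⟩)
  · exact Finset.mem_union_right _ (Finset.mem_image.mpr ⟨l, h, rfl⟩)

lemma cnfVars_mono {A B : CNF} (h : A ⊆ B) : cnfVars A ⊆ cnfVars B := by
  intro y hy
  obtain ⟨C, hC, hyC⟩ := Finset.mem_biUnion.mp hy
  exact Finset.mem_biUnion.mpr ⟨C, h hC, hyC⟩

lemma resmem_vars {φ : CNF} {C : Clause} (h : ResMem φ C) : clauseVars C ⊆ cnfVars φ := by
  induction h with
  | base hC _ => intro y hy; exact Finset.mem_biUnion.mpr ⟨_, hC, hy⟩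
  | @resolve C D x h1 h2 hnt ih1 ih2 =>
    intro y hy
    obtain ⟨l, hl, rfl⟩ := Finset.mem_image.mp hy
    rcases Finset.mem_union.mp hl with h | h
    · exact ih1 (Finset.mem_image.mpr ⟨l, Finset.mem_insert_of_mem h, rfl⟩)
    · exact ih2 (Finset.mem_image.mpr ⟨l, Finset.mem_insert_of_mem h, rfl⟩)

/-- Soundness of resolution. -/
lemma resmem_sound {φ : CNF} {τ : PAssign} (hτ : Satisfies τ φ) {C : Clause}
    (h : ResMem φ C) : SatClause τ C := by
  induction h with
  | base hC _ => exact hτ _ hC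
  | @resolve C D x h1 h2 hnt ih1 ih2 =>
    rcases ih1 with ht | ⟨l1, hl1, hd1, hv1⟩
    · exact absurd ht (resmem_nontaut h1)
    rcases ih2 with ht | ⟨l2, hl2, hd2, hv2⟩
    · exact absurd ht (resmem_nontaut h2)
    rcases Finset.mem_insert.mp hl1 with rfl | hl1C
    · rcases Finset.mem_insert.mp hl2 with rfl | hl2D
      · simp [litVal] at hv1 hv2
        rw [hv1] at hv2; exact absurd hv2 (by simp)
      · exact Or.inr ⟨l2, Finset.mem_union_right _ hl2D, hd2, hv2⟩
    · exact Or.inr ⟨l1, Finset.mem_union_left _ hl1C, hd1, hv1⟩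

/-- Every resolution consequence of a Krom formula contains a Krom resolution
consequence. -/
lemma krom_sub {T : CNF} (hK : IsKrom T) {C : Clause} (h : ResMem T C) :
    ∃ C', C' ⊆ C ∧ ResMem T C' ∧ C'.card ≤ 2 := by
  induction h with
  | base hC hnt => exact ⟨_, Finset.Subset.refl _, ResMem.base hC hnt, hK _ hC⟩
  | @resolve C D x h1 h2 hnt ih1 ih2 =>
    obtain ⟨C1, hC1s, hC1m, hC1c⟩ := ih1
    obtain ⟨C2, hC2s, hC2m, hC2c⟩ := ih2
    by_cases hx1 : (x, true) ∈ C1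
    · by_cases hx2 : (x, false) ∈ C2
      · have hsub : C1.erase (x,true) ∪ C2.erase (x,false) ⊆ C ∪ D := by
          intro l hl
          rcases Finset.mem_union.mp hl with hl | hl
          · have h' := hC1s (Finset.mem_of_mem_erase hl)
            rcases Finset.mem_insert.mp h' with rfl | h'
            · exact absurd rfl (Finset.ne_of_mem_erase hl)
            · exact Finset.mem_union_left _ h'
          · have h' := hC2s (Finset.mem_of_mem_erase hl)
            rcases Finset.mem_insert.mp h' with rfl | h'
            · exact absurd rfl (Finset.ne_of_mem_erase hl)
            · exact Finset.mem_union_right _ h'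
        have hntR : ¬ Tautological (C1.erase (x,true) ∪ C2.erase (x,false)) :=
          fun ht => hnt (taut_mono hsub ht)
        refine ⟨_, hsub, ResMem.resolve ((Finset.insert_erase hx1).symm ▸ hC1m)
          ((Finset.insert_erase hx2).symm ▸ hC2m) hntR, ?_⟩
        have e1 : (C1.erase (x,true)).card ≤ 1 := by
          rw [Finset.card_erase_of_mem hx1]; omega
        have e2 : (C2.erase (x,false)).card ≤ 1 := by
          rw [Finset.card_erase_of_mem hx2]; omega
        calc (C1.erase (x,true) ∪ C2.erase (x,false)).card
            ≤ _ + _ := Finset.card_union_le _ _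
          _ ≤ 2 := by omega
      · refine ⟨C2, ?_, hC2m, hC2c⟩
        intro l hl
        rcases Finset.mem_insert.mp (hC2s hl) with rfl | h'
        · exact absurd hl hx2
        · exact Finset.mem_union_right _ h'
    · refine ⟨C1, ?_, hC1m, hC1c⟩
      intro l hl
      rcases Finset.mem_insert.mp (hC1s hl) with rfl | h'
      · exact absurd hl hx1
      · exact Finset.mem_union_left _ h'

lemma negLit_eq {l : Lit} {y : Var} {b : Bool} (h : negLit l = (y, b)) : l = (y, !b) := by
  obtain ⟨a, c⟩ := l
  simp only [negLit, Prod.mk.injEq] at h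
  obtain ⟨rfl, h2⟩ := h
  rw [← h2, Bool.not_not]

/-- Lifting unit clauses out of a resolution derivation. -/
lemma unit_lift {T : CNF} {L : Finset Lit}
    (hL : ∀ x : Var, ¬ ((x, true) ∈ L ∧ (x, false) ∈ L)) {C : Clause}
    (h : ResMem (T ∪ L.image (fun l => ({l} : Clause))) C) :
    (∃ l ∈ L, l ∈ C) ∨ ∃ C', ResMem T C' ∧ C' ⊆ C ∪ L.image negLit := by
  induction h with
  | base hC hnt =>
    rcases Finset.mem_union.mp hC with hC | hC
    · exact Or.inr ⟨_, ResMem.base hC hnt, Finset.subset_union_left⟩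
    · obtain ⟨l, hlL, rfl⟩ := Finset.mem_image.mp hC
      exact Or.inl ⟨l, hlL, Finset.mem_singleton_self l⟩
  | @resolve C D x h1 h2 hnt ih1 ih2 =>
    by_cases hdis : ∃ l ∈ L, l ∈ C ∪ D
    · exact Or.inl hdis
    push_neg at hdis
    right
    rcases ih1 with ⟨l1, hl1L, hl1⟩ | ⟨D1, hD1m, hD1s⟩
    · have he1 : l1 = (x, true) := by
        rcases Finset.mem_insert.mp hl1 with h' | h'
        · exact h'
        · exact absurd (Finset.mem_union_left _ h') (hdis l1 hl1L)
      subst he1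
      have hxf : (x, false) ∈ L.image negLit :=
        Finset.mem_image.mpr ⟨(x,true), hl1L, rfl⟩
      rcases ih2 with ⟨l2, hl2L, hl2⟩ | ⟨D2, hD2m, hD2s⟩
      · have he2 : l2 = (x, false) := by
          rcases Finset.mem_insert.mp hl2 with h' | h'
          · exact h'
          · exact absurd (Finset.mem_union_right _ h') (hdis l2 hl2L)
        exact absurd ⟨hl1L, he2 ▸ hl2L⟩ (hL x)
      · refine ⟨D2, hD2m, ?_⟩
        intro l hl
        rcases Finset.mem_union.mp (hD2s hl) with hl' | hl'
        · rcases Finset.mem_insert.mp hl' with rfl | h'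
          · exact Finset.mem_union_right _ hxf
          · exact Finset.mem_union_left _ (Finset.mem_union_right _ h')
        · exact Finset.mem_union_right _ hl'
    · rcases ih2 with ⟨l2, hl2L, hl2⟩ | ⟨D2, hD2m, hD2s⟩
      · have he2 : l2 = (x, false) := by
          rcases Finset.mem_insert.mp hl2 with h' | h'
          · exact h'
          · exact absurd (Finset.mem_union_right _ h') (hdis l2 hl2L)
        subst he2
        have hxt : (x, true) ∈ L.image negLit :=
          Finset.mem_image.mpr ⟨(x,false), hl2L, rfl⟩
        refine ⟨D1, hD1m, ?_⟩
        intro l hl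
        rcases Finset.mem_union.mp (hD1s hl) with hl' | hl'
        · rcases Finset.mem_insert.mp hl' with rfl | h'
          · exact Finset.mem_union_right _ hxt
          · exact Finset.mem_union_left _ (Finset.mem_union_left _ h')
        · exact Finset.mem_union_right _ hl'
      · by_cases hxt : (x, true) ∈ D1
        · by_cases hxf : (x, false) ∈ D2
          · have hsub : D1.erase (x,true) ∪ D2.erase (x,false) ⊆ (C ∪ D) ∪ L.image negLit := by
              intro l hl
              rcases Finset.mem_union.mp hl with hl | hl
              · have h' := hD1s (Finset.mem_of_mem_erase hl)
                rcases Finset.mem_union.mp h' with h' | h'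
                · rcases Finset.mem_insert.mp h' with rfl | h'
                  · exact absurd rfl (Finset.ne_of_mem_erase hl)
                  · exact Finset.mem_union_left _ (Finset.mem_union_left _ h')
                · exact Finset.mem_union_right _ h'
              · have h' := hD2s (Finset.mem_of_mem_erase hl)
                rcases Finset.mem_union.mp h' with h' | h'
                · rcases Finset.mem_insert.mp h' with rfl | h'
                  · exact absurd rfl (Finset.ne_of_mem_erase hl)
                  · exact Finset.mem_union_left _ (Finset.mem_union_right _ h')
                · exact Finset.mem_union_right _ h'
            have hntR : ¬ Tautological (D1.erase (x,true) ∪ D2.erase (x,false)) := by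
              rintro ⟨y, hy1, hy2⟩
              have k1 := hsub hy1
              have k2 := hsub hy2
              rcases Finset.mem_union.mp k1 with k1 | k1 <;>
                rcases Finset.mem_union.mp k2 with k2 | k2
              · exact hnt ⟨y, k1, k2⟩
              · obtain ⟨l, hlL, he⟩ := Finset.mem_image.mp k2
                have hl' : l = (y, true) := negLit_eq he
                exact hdis (y, true) (hl' ▸ hlL) k1
              · obtain ⟨l, hlL, he⟩ := Finset.mem_image.mp k1
                have hl' : l = (y, false) := negLit_eq he
                exact hdis (y, false) (hl' ▸ hlL) k2
              · obtain ⟨l, hlL, he⟩ := Finset.mem_image.mp k1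
                have hl' : l = (y, false) := negLit_eq he
                obtain ⟨l2', hlL', he'⟩ := Finset.mem_image.mp k2
                have hl2' : l2' = (y, true) := negLit_eq he'
                exact hL y ⟨hl2' ▸ hlL', hl' ▸ hlL⟩
            exact ⟨_, ResMem.resolve ((Finset.insert_erase hxt).symm ▸ hD1m)
              ((Finset.insert_erase hxf).symm ▸ hD2m) hntR, hsub⟩
          · refine ⟨D2, hD2m, ?_⟩
            intro l hl
            rcases Finset.mem_union.mp (hD2s hl) with h' | h'
            · rcases Finset.mem_insert.mp h' with rfl | h'
              · exact absurd hl hxf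
              · exact Finset.mem_union_left _ (Finset.mem_union_right _ h')
            · exact Finset.mem_union_right _ h'
        · refine ⟨D1, hD1m, ?_⟩
          intro l hl
          rcases Finset.mem_union.mp (hD1s hl) with h' | h'
          · rcases Finset.mem_insert.mp h' with rfl | h'
            · exact absurd hl hxt
            · exact Finset.mem_union_left _ (Finset.mem_union_left _ h')
          · exact Finset.mem_union_right _ h'

/-- Refutation completeness: a resolution-closed set of nontautological clauses not
containing the empty clause is satisfiable. -/
lemma model_exists (V : Finset Var) :
    ∀ R : Clause → Prop,
      (∀ C, R C → clauseVars C ⊆ V) →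
      (∀ C, R C → ¬ Tautological C) →
      (∀ (C D : Clause) (x : Var), R (insert (x, true) C) → R (insert (x, false) D) →
        ¬ Tautological (C ∪ D) → R (C ∪ D)) →
      ¬ R ∅ →
      ∃ v : Var → Bool, ∀ C, R C → ∃ l ∈ C, (if l.2 then v l.1 else !(v l.1)) = true := by
  classical
  induction V using Finset.induction_on with
  | empty =>
    intro R hvars hnt hcl hne
    refine ⟨fun _ => true, fun C hC => absurd hC ?_⟩
    have : C = ∅ := by
      by_contra hCne
      obtain ⟨l, hl⟩ := Finset.nonempty_iff_ne_empty.mpr hCne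
      have : l.1 ∈ clauseVars C := Finset.mem_image.mpr ⟨l, hl, rfl⟩
      exact absurd (hvars C hC this) (Finset.notMem_empty _)
    exact this ▸ hne
  | @insert x V' hx ih =>
    intro R hvars hnt hcl hne
    have h1 : ∀ C, (R C ∧ x ∉ clauseVars C) → clauseVars C ⊆ V' := by
      intro C hC y hy
      rcases Finset.mem_insert.mp (hvars C hC.1 hy) with rfl | h
      · exact absurd hy hC.2
      · exact h
    have h3 : ∀ (C D : Clause) (y : Var),
        (R (insert (y, true) C) ∧ x ∉ clauseVars (insert (y, true) C)) →
        (R (insert (y, false) D) ∧ x ∉ clauseVars (insert (y, false) D)) →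
        ¬ Tautological (C ∪ D) → (R (C ∪ D) ∧ x ∉ clauseVars (C ∪ D)) := by
      intro C D y hC hD hnt'
      refine ⟨hcl C D y hC.1 hD.1 hnt', fun hxm => ?_⟩
      rcases Finset.mem_union.mp (clauseVars_union C D hxm) with h | h
      · exact hC.2 (clauseVars_mono (Finset.subset_insert _ _) h)
      · exact hD.2 (clauseVars_mono (Finset.subset_insert _ _) h)
    obtain ⟨v0, hv0⟩ := ih (fun C => R C ∧ x ∉ clauseVars C) h1
      (fun C hC => hnt C hC.1) h3 (fun h => hne h.1)
    have hsatx : ∀ C, R C → x ∉ clauseVars C →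
        ∃ l ∈ C, l.1 ≠ x ∧ (if l.2 then v0 l.1 else !(v0 l.1)) = true := by
      intro C hC hxn
      obtain ⟨l, hl, hlv⟩ := hv0 C ⟨hC, hxn⟩
      exact ⟨l, hl, fun he => hxn (he ▸ Finset.mem_image.mpr ⟨l, hl, rfl⟩), hlv⟩
    have hvarmem : ∀ (C : Clause) (y : Var), y ∈ clauseVars C ↔
        ((y, true) ∈ C ∨ (y, false) ∈ C) := by
      intro C y
      constructor
      · intro hy
        obtain ⟨l, hl, rfl⟩ := Finset.mem_image.mp hy
        obtain ⟨a, b⟩ := l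
        cases b
        · exact Or.inr hl
        · exact Or.inl hl
      · rintro (h | h) <;> exact Finset.mem_image.mpr ⟨_, h, rfl⟩
    by_cases hbad : ∃ D, R D ∧ (x, false) ∈ D ∧
        ∀ l ∈ D.erase (x, false), (if l.2 then v0 l.1 else !(v0 l.1)) = false
    · obtain ⟨D, hDR, hDf, hDall⟩ := hbad
      have hDt : (x, true) ∉ D := fun h => hnt D hDR ⟨x, h, hDf⟩
      refine ⟨fun y => if y = x then false else v0 y, fun C hC => ?_⟩
      by_cases hxf : (x, false) ∈ C
      · exact ⟨(x, false), hxf, by simp⟩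
      by_cases hxt : (x, true) ∈ C
      · have hCf : (x, false) ∉ C := hxf
        have hgood : ∃ l ∈ C.erase (x, true), l.1 ≠ x ∧
            (if l.2 then v0 l.1 else !(v0 l.1)) = true := by
          by_cases htt : Tautological (C.erase (x, true) ∪ D.erase (x, false))
          · obtain ⟨y, hy1, hy2⟩ := htt
            rcases Finset.mem_union.mp hy1 with k1 | k1 <;>
              rcases Finset.mem_union.mp hy2 with k2 | k2
            · exact absurd ⟨y, Finset.mem_of_mem_erase k1, Finset.mem_of_mem_erase k2⟩
                (hnt C hC)
            · have hyx : y ≠ x := fun he => (Finset.ne_of_mem_erase k2) (by rw [he])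
              cases hv : v0 y with
              | false => exact absurd (hDall _ k2) (by simp [hv])
              | true => exact ⟨(y, true), k1, hyx, by simp [hv]⟩
            · have hyx : y ≠ x := by
                rintro rfl; exact hDt (Finset.mem_of_mem_erase k1)
              cases hv : v0 y with
              | true => exact absurd (hDall _ k1) (by simp [hv])
              | false => exact ⟨(y, false), k2, hyx, by simp [hv]⟩
            · exact absurd ⟨y, Finset.mem_of_mem_erase k1, Finset.mem_of_mem_erase k2⟩
                (hnt D hDR)
          · have hR' : R (C.erase (x, true) ∪ D.erase (x, false)) :=
              hcl _ _ x ((Finset.insert_erase hxt).symm ▸ hC)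
                ((Finset.insert_erase hDf).symm ▸ hDR) htt
            have hxn : x ∉ clauseVars (C.erase (x, true) ∪ D.erase (x, false)) := by
              intro hmem
              rcases (hvarmem _ _).mp hmem with h | h <;>
                rcases Finset.mem_union.mp h with h' | h'
              · exact (Finset.ne_of_mem_erase h') rfl
              · exact hDt (Finset.mem_of_mem_erase h')
              · exact hCf (Finset.mem_of_mem_erase h')
              · exact (Finset.ne_of_mem_erase h') rfl
            obtain ⟨l, hl, hlx, hlv⟩ := hsatx _ hR' hxn
            rcases Finset.mem_union.mp hl with h' | h'
            · exact ⟨l, h', hlx, hlv⟩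
            · exact absurd hlv (by rw [hDall l h']; simp)
        obtain ⟨l, hl, hlx, hlv⟩ := hgood
        exact ⟨l, Finset.mem_of_mem_erase hl, by simpa [hlx] using hlv⟩
      · have hxn : x ∉ clauseVars C := by
          intro hmem
          rcases (hvarmem _ _).mp hmem with h | h
          · exact hxt h
          · exact hxf h
        obtain ⟨l, hl, hlx, hlv⟩ := hsatx _ hC hxn
        exact ⟨l, hl, by simpa [hlx] using hlv⟩
    · push_neg at hbad
      refine ⟨fun y => if y = x then true else v0 y, fun C hC => ?_⟩
      by_cases hxt : (x, true) ∈ C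
      · exact ⟨(x, true), hxt, by simp⟩
      by_cases hxf : (x, false) ∈ C
      · obtain ⟨l, hl, hlv⟩ := hbad C hC hxf
        have hlv' : (if l.2 then v0 l.1 else !(v0 l.1)) = true := by
          cases h' : (if l.2 then v0 l.1 else !(v0 l.1))
          · exact absurd h' hlv
          · rfl
        have hlx : l.1 ≠ x := by
          intro he
          obtain ⟨a, b⟩ := l
          dsimp at he
          subst he
          cases b
          · exact (Finset.ne_of_mem_erase hl) rfl
          · exact hxt (Finset.mem_of_mem_erase hl)
        exact ⟨l, Finset.mem_of_mem_erase hl, by simpa [hlx] using hlv'⟩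
      · have hxn : x ∉ clauseVars C := by
          intro hmem
          rcases (hvarmem _ _).mp hmem with h | h
          · exact hxt h
          · exact hxf h
        obtain ⟨l, hl, hlx, hlv⟩ := hsatx _ hC hxn
        exact ⟨l, hl, by simpa [hlx] using hlv⟩

/-- TrimRes characterization of entailment for Krom theories: for S ⊆ H, m ∈ M and
T ∪ S consistent, T ∪ S ⊨ {{m}} iff {m} ∈ TrimRes(T,H,M) or {¬h, m} ∈ TrimRes(T,H,M)
for some h ∈ S. -/
theorem stmt_9 (P : AbdInst) (S : Finset Var) (m : Var)
    (hKrom : IsKrom P.T) (hS : S ⊆ P.H) (hm : m ∈ P.M)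
    (hcon : Consistent (P.T ∪ unitCNF S)) :
    Entails (P.T ∪ unitCNF S) (unitCNF {m}) ↔
      InTrimRes P.T P.H P.M ({(m, true)} : Clause) ∨
        ∃ h ∈ S, InTrimRes P.T P.H P.M ({(h, false), (m, true)} : Clause) := by
  classical
  obtain ⟨τc, hτc⟩ := hcon
  have hτcT : Satisfies τc P.T := fun C hC => hτc C (Finset.mem_union_left _ hC)
  have hSval : ∀ s ∈ S, s ∈ τc.dom ∧ τc.val s = true := by
    intro s hs
    have hmem : ({(s, true)} : Clause) ∈ P.T ∪ unitCNF S :=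
      Finset.mem_union_right _ (Finset.mem_image.mpr ⟨s, hs, rfl⟩)
    rcases hτc _ hmem with ht | ⟨l, hl, hd, hv⟩
    · exact absurd ht (taut_singleton _)
    · rw [Finset.mem_singleton] at hl
      subst hl
      simp only [litVal] at hv
      exact ⟨hd, by simpa using hv⟩
  have hTne : ¬ ResMem P.T ∅ := by
    intro h
    rcases resmem_sound hτcT h with ht | ⟨l, hl, _⟩
    · obtain ⟨y, hy, _⟩ := ht
      exact absurd hy (Finset.notMem_empty _)
    · exact absurd hl (Finset.notMem_empty _)
  have hmS : m ∉ S := fun h => (Finset.disjoint_left.mp P.hHM (hS h)) hm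
  constructor
  · -- forward direction: completeness
    intro hent
    set L : Finset Lit := S.image (fun s => (s, true)) ∪ {(m, false)} with hLdef
    have hunits : L.image (fun l => ({l} : Clause))
        = unitCNF S ∪ ({({(m, false)} : Clause)} : CNF) := by
      rw [hLdef, Finset.image_union, Finset.image_image, Finset.image_singleton]
      rfl
    set φ : CNF := P.T ∪ L.image (fun l => ({l} : Clause)) with hφdef
    have hTSφ : P.T ∪ unitCNF S ⊆ φ := by
      rw [hφdef, hunits]
      intro C hC
      rcases Finset.mem_union.mp hC with h | h
      · exact Finset.mem_union_left _ h
      · exact Finset.mem_union_right _ (Finset.mem_union_left _ h)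
    have hmφ : ({(m, false)} : Clause) ∈ φ := by
      rw [hφdef, hunits]
      exact Finset.mem_union_right _ (Finset.mem_union_right _ (Finset.mem_singleton_self _))
    have hmvar : m ∈ cnfVars φ :=
      Finset.mem_biUnion.mpr ⟨_, hmφ, Finset.mem_image.mpr ⟨(m, false), Finset.mem_singleton_self _, rfl⟩⟩
    have hLok : ∀ x : Var, ¬ ((x, true) ∈ L ∧ (x, false) ∈ L) := by
      rintro x ⟨ht, hf⟩
      rcases Finset.mem_union.mp hf with h2 | h2
      · obtain ⟨s, hs, he⟩ := Finset.mem_image.mp h2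
        simp at he
      · rw [Finset.mem_singleton, Prod.mk.injEq] at h2
        obtain ⟨rfl, -⟩ := h2
        rcases Finset.mem_union.mp ht with h1 | h1
        · obtain ⟨s, hs, he⟩ := Finset.mem_image.mp h1
          rw [Prod.mk.injEq] at he
          exact hmS (he.1 ▸ hs)
        · rw [Finset.mem_singleton, Prod.mk.injEq] at h1
          simp at h1
    have href : ResMem φ ∅ := by
      by_contra hno
      obtain ⟨v, hv⟩ := model_exists (cnfVars φ) (ResMem φ)
        (fun C h => resmem_vars h) (fun C h => resmem_nontaut h)
        (fun C D x h1 h2 h3 => ResMem.resolve h1 h2 h3) hno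
      set τ : PAssign := ⟨cnfVars φ, v⟩ with hτdef
      have hsat : Satisfies τ (P.T ∪ unitCNF S) := by
        intro C hC
        by_cases ht : Tautological C
        · exact Or.inl ht
        · obtain ⟨l, hl, hlv⟩ := hv C (ResMem.base (hTSφ hC) ht)
          exact Or.inr ⟨l, hl,
            Finset.mem_biUnion.mpr ⟨C, hTSφ hC, Finset.mem_image.mpr ⟨l, hl, rfl⟩⟩, hlv⟩
      have hmod : IsModel τ (P.T ∪ unitCNF S) :=
        ⟨hsat, (cnfVars_mono hTSφ).trans (Finset.Subset.refl _)⟩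
      have hsub : cnfVars (unitCNF ({m} : Finset Var)) ⊆ τ.dom := by
        intro y hy
        obtain ⟨C, hC, hyC⟩ := Finset.mem_biUnion.mp hy
        obtain ⟨z, hz, rfl⟩ := Finset.mem_image.mp hC
        rw [Finset.mem_singleton] at hz
        subst hz
        obtain ⟨l, hl, rfl⟩ := Finset.mem_image.mp hyC
        rw [Finset.mem_singleton] at hl
        subst hl
        exact hmvar
      have hmm := (hent τ hmod hsub).1 _ (Finset.mem_image.mpr ⟨m, Finset.mem_singleton_self _, rfl⟩)
      rcases hmm with ht | ⟨l, hl, hd, hlv⟩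
      · exact absurd ht (taut_singleton _)
      · rw [Finset.mem_singleton] at hl
        subst hl
        have hvm : v m = true := by simpa [litVal, hτdef] using hlv
        obtain ⟨l', hl', hlv'⟩ := hv _ (ResMem.base hmφ (taut_singleton _))
        rw [Finset.mem_singleton] at hl'
        subst hl'
        simp [hvm] at hlv'
    rcases unit_lift hLok href with ⟨l, -, hl⟩ | ⟨C', hC'm, hC's⟩
    · exact absurd hl (Finset.notMem_empty _)
    rw [Finset.empty_union] at hC's
    have hnegs : L.image negLit = S.image (fun s => (s, false)) ∪ {(m, true)} := by
      rw [hLdef, Finset.image_union, Finset.image_image, Finset.image_singleton]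
      rfl
    rw [hnegs] at hC's
    obtain ⟨C'', hC''s, hC''m, hC''c⟩ := krom_sub hKrom hC'm
    have hC''negs : C'' ⊆ S.image (fun s => (s, false)) ∪ {(m, true)} :=
      hC''s.trans hC's
    by_cases hmem : (m, true) ∈ C''
    · by_cases hrest : C''.erase (m, true) = ∅
      · have hC''eq : C'' = ({(m, true)} : Clause) := by
          have := Finset.insert_erase hmem
          rw [hrest] at this
          exact this.symm
        refine Or.inl (Or.inr ⟨hTne, hC''eq ▸ hC''m, ?_⟩)
        intro l hl
        rw [Finset.mem_singleton] at hl
        subst hl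
        exact Finset.mem_union_right _ hm
      · obtain ⟨l0, hl0⟩ := Finset.nonempty_iff_ne_empty.mpr hrest
        have hl0m : l0 ∈ C'' := Finset.mem_of_mem_erase hl0
        have : ∃ s ∈ S, l0 = (s, false) := by
          rcases Finset.mem_union.mp (hC''negs hl0m) with h | h
          · obtain ⟨s, hs, he⟩ := Finset.mem_image.mp h
            exact ⟨s, hs, he.symm⟩
          · rw [Finset.mem_singleton] at h
            exact absurd (h ▸ hl0) (fun hh => (Finset.ne_of_mem_erase hh) rfl)
        obtain ⟨s, hs, rfl⟩ := this
        have hne : ((s, false) : Lit) ≠ (m, true) := by simp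
        have hpair : ({(s, false), (m, true)} : Clause) = C'' := by
          apply Finset.eq_of_subset_of_card_le
          · intro l hl
            rcases Finset.mem_insert.mp hl with rfl | hl
            · exact hl0m
            · rw [Finset.mem_singleton] at hl
              exact hl ▸ hmem
          · rw [Finset.card_insert_of_notMem (by simp), Finset.card_singleton]
            exact hC''c
        exact Or.inr ⟨s, hs, Or.inr ⟨hTne, hpair ▸ hC''m, by
          intro l hl
          rcases Finset.mem_insert.mp hl with rfl | hl
          · exact Finset.mem_union_left _ (hS hs)
          · rw [Finset.mem_singleton] at hl
            subst hl
            exact Finset.mem_union_right _ hm⟩⟩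
    · exfalso
      have hall : ∀ l ∈ C'', ∃ s ∈ S, l = (s, false) := by
        intro l hl
        rcases Finset.mem_union.mp (hC''negs hl) with h | h
        · obtain ⟨s, hs, he⟩ := Finset.mem_image.mp h
          exact ⟨s, hs, he.symm⟩
        · rw [Finset.mem_singleton] at h
          exact absurd (h ▸ hl) hmem
      rcases resmem_sound hτcT hC''m with ht | ⟨l, hl, hd, hv⟩
      · exact (resmem_nontaut hC''m) ht
      · obtain ⟨s, hs, rfl⟩ := hall l hl
        have := (hSval s hs).2
        simp [litVal, this] at hv
  · -- backward direction: soundness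
    intro hRHS τ hmod hsub
    refine ⟨?_, hsub⟩
    intro C hC
    obtain ⟨z, hz, rfl⟩ := Finset.mem_image.mp hC
    rw [Finset.mem_singleton] at hz
    subst z
    have hmdom : m ∈ τ.dom := by
      apply hsub
      exact Finset.mem_biUnion.mpr ⟨_, Finset.mem_image.mpr ⟨m, Finset.mem_singleton_self _, rfl⟩,
        Finset.mem_image.mpr ⟨(m, true), Finset.mem_singleton_self _, rfl⟩⟩
    have hτT : Satisfies τ P.T := fun C hC => hmod.1 C (Finset.mem_union_left _ hC)
    have hval : τ.val m = true := by
      rcases hRHS with hIn | ⟨h, hh, hIn⟩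
      · rcases hIn with ⟨-, habs⟩ | ⟨-, hres, -⟩
        · exact absurd habs (by
            intro he
            have : ((m, true) : Lit) ∈ (∅ : Clause) := he ▸ Finset.mem_singleton_self _
            exact absurd this (Finset.notMem_empty _))
        · rcases resmem_sound hτT hres with ht | ⟨l, hl, hd, hv⟩
          · exact absurd ht (taut_singleton _)
          · rw [Finset.mem_singleton] at hl
            subst hl
            simpa [litVal] using hv
      · have hhm : h ≠ m := fun he => (Finset.disjoint_left.mp P.hHM (hS hh)) (he ▸ hm)
        rcases hIn with ⟨-, habs⟩ | ⟨-, hres, -⟩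
        · exact absurd habs (by
            intro he
            have : ((h, false) : Lit) ∈ (∅ : Clause) := he ▸ Finset.mem_insert_self _ _
            exact absurd this (Finset.notMem_empty _))
        · -- τ satisfies the unit clause {(h,true)}
          have hhval : τ.val h = true := by
            have hmem : ({(h, true)} : Clause) ∈ P.T ∪ unitCNF S :=
              Finset.mem_union_right _ (Finset.mem_image.mpr ⟨h, hh, rfl⟩)
            rcases hmod.1 _ hmem with ht | ⟨l, hl, hd, hv⟩
            · exact absurd ht (taut_singleton _)
            · rw [Finset.mem_singleton] at hl
              subst hl
              simpa [litVal] using hv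
          rcases resmem_sound hτT hres with ht | ⟨l, hl, hd, hv⟩
          · exact absurd ht (by
              rintro ⟨y, hy1, hy2⟩
              rcases Finset.mem_insert.mp hy1 with he | he
              · simp at he
              · rw [Finset.mem_singleton, Prod.mk.injEq] at he
                obtain ⟨rfl, -⟩ := he
                rcases Finset.mem_insert.mp hy2 with he2 | he2
                · rw [Prod.mk.injEq] at he2
                  exact hhm he2.1.symm
                · rw [Finset.mem_singleton] at he2
                  simp at he2)
          · rcases Finset.mem_insert.mp hl with rfl | hl
            · simp [litVal, hhval] at hv
            · rw [Finset.mem_singleton] at hl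
              subst hl
              simpa [litVal] using hv
    exact Or.inr ⟨(m, true), Finset.mem_singleton_self _, hmdom, by simpa [litVal] using hval⟩
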